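/- Let α ∈ ℂ and z ∈ ℂ with Re z > 0. Then the function w ↦ ∫_0^∞ e^{-t - w/t} t^{-α-1} dt is complex differentiable at z with derivative −∫_0^∞ e^{-t - z/t} t^{-α-2} dt (i.e. ∂_z U_α(z) = −U_{α+1}(z)), and moreover z·(−∫_0^∞ e^{-t - z/t} t^{-α-2} dt) + α·∫_0^∞ e^{-t - z/t} t^{-α-1} dt = −∫_0^∞ e^{-t - z/t} t^{-α} dt (i.e. (z∂_z + α)U_α(z) = −U_{α-1}(z)). -/

import Mathlib

/-
Both claims come from elementary facts about the kernel `e^{-t-w/t} t^β` on `(0, ∞)`. The bound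
`e^{-c/t} ≤ n! t^n / c^n` tames any power of `t` near `0`, so for `Re w ≥ c > 0` the kernel is
dominated by a Gamma integrand. This gives integrability and, uniformly for `w` in the disc of
radius `Re z / 2` around `z`, differentiation under the integral sign. For the recurrence,
`d/dt (e^{-t-z/t} t^β) = (z t^{β-2} + β t^{β-1} - t^β) e^{-t-z/t}`, and the kernel vanishes at
both ends of `(0, ∞)`, so the integral of the right-hand side is zero.
-/

open MeasureTheory Complex Set Filter Topology
open scoped Nat

theorem integral_Ioi_of_hasDerivAt_of_tendsto_nhdsGT {E : Type*} [NormedAddCommGroup E]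
    [NormedSpace ℝ E] [CompleteSpace E] {f f' : ℝ → E} {a : ℝ} {m l : E}
    (hderiv : ∀ x ∈ Ioi a, HasDerivAt f (f' x) x) (hint : IntegrableOn f' (Ioi a))
    (hbot : Tendsto f (𝓝[>] a) (𝓝 m)) (htop : Tendsto f atTop (𝓝 l)) :
    ∫ x in Ioi a, f' x = l - m := by
  have hb : a < a + 1 := lt_add_one a
  have hcont : ContinuousAt f (a + 1) := (hderiv _ hb).continuousAt
  have hleft : ∫ x in Ioc a (a + 1), f' x = f (a + 1) - m := by
    rw [← intervalIntegral.integral_of_le hb.le]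
    exact intervalIntegral.integral_eq_sub_of_hasDerivAt_of_tendsto hb
      (fun x hx => hderiv x hx.1)
      ((intervalIntegrable_iff_integrableOn_Ioc_of_le hb.le).2 (hint.mono_set Ioc_subset_Ioi_self))
      hbot hcont.continuousWithinAt
  have hright : ∫ x in Ioi (a + 1), f' x = l - f (a + 1) :=
    integral_Ioi_of_hasDerivAt_of_tendsto hcont.continuousWithinAt
      (fun x hx => hderiv x (hb.trans hx)) (hint.mono_set (Ioi_subset_Ioi hb.le)) htop
  rw [← Ioc_union_Ioi_eq_Ioi hb.le, setIntegral_union Ioc_disjoint_Ioi_same measurableSet_Ioi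
    (hint.mono_set Ioc_subset_Ioi_self) (hint.mono_set (Ioi_subset_Ioi hb.le)), hleft, hright]
  abel

theorem Real.exp_neg_div_le_mul_pow {c t : ℝ} (hc : 0 < c) (ht : 0 < t) (n : ℕ) :
    Real.exp (-(c / t)) ≤ n ! / c ^ n * t ^ n := by
  calc Real.exp (-(c / t)) = (Real.exp (c / t))⁻¹ := Real.exp_neg _
    _ ≤ ((c / t) ^ n / n !)⁻¹ :=
      inv_anti₀ (by positivity) (Real.pow_div_factorial_le_exp _ (by positivity) n)
    _ = n ! / c ^ n * t ^ n := by rw [div_pow]; field_simp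

theorem integrableOn_exp_neg_sub_div_mul_rpow {c : ℝ} (hc : 0 < c) (b : ℝ) :
    IntegrableOn (fun t : ℝ => Real.exp (-t - c / t) * t ^ b) (Ioi 0) := by
  obtain ⟨n, hn⟩ : ∃ n : ℕ, -b ≤ n := ⟨⌈-b⌉₊, Nat.le_ceil _⟩
  have hGamma : IntegrableOn (fun t : ℝ => n ! / c ^ n * (Real.exp (-t) * t ^ (b + n + 1 - 1)))
      (Ioi 0) :=
    (Real.GammaIntegral_convergent (by linarith)).const_mul _
  refine hGamma.mono' ?_ ?_
  · refine ContinuousOn.aestronglyMeasurable ?_ measurableSet_Ioi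
    exact ContinuousOn.mul (by fun_prop (disch := exact fun t ht => ne_of_gt ht))
      (continuousOn_id.rpow_const fun t ht => Or.inl (ne_of_gt ht))
  · filter_upwards [ae_restrict_mem measurableSet_Ioi] with t (ht : 0 < t)
    rw [Real.norm_of_nonneg (by positivity), add_sub_cancel_right, Real.rpow_add ht,
      Real.rpow_natCast, sub_eq_add_neg, Real.exp_add]
    calc Real.exp (-t) * Real.exp (-(c / t)) * t ^ b
        ≤ Real.exp (-t) * (n ! / c ^ n * t ^ n) * t ^ b := by
          gcongr; exact Real.exp_neg_div_le_mul_pow hc ht n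
      _ = n ! / c ^ n * (Real.exp (-t) * (t ^ b * t ^ n)) := by ring

/-- With this kernel, `U_α(w) = π^{-1/2} ∫ t in Ioi 0, besselKernel w (-α - 1) t`. -/
noncomputable def besselKernel (w β : ℂ) (t : ℝ) : ℂ :=
  Complex.exp (-(t : ℂ) - w / (t : ℂ)) * (t : ℂ) ^ β

namespace besselKernel

theorem norm_eq (w β : ℂ) {t : ℝ} (ht : 0 < t) :
    ‖besselKernel w β t‖ = Real.exp (-t - w.re / t) * t ^ β.re := by
  rw [besselKernel, norm_mul, Complex.norm_exp, Complex.norm_cpow_eq_rpow_re_of_pos ht]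
  simp

theorem norm_le {w β : ℂ} {c t : ℝ} (hc : c ≤ w.re) (ht : 0 < t) :
    ‖besselKernel w β t‖ ≤ Real.exp (-t - c / t) * t ^ β.re := by
  rw [norm_eq w β ht]
  gcongr

theorem continuousOn (w β : ℂ) : ContinuousOn (besselKernel w β) (Ioi 0) := by
  have hne : ∀ t ∈ Ioi (0 : ℝ), (t : ℂ) ≠ 0 := fun t ht => ofReal_ne_zero.2 (ne_of_gt ht)
  refine ContinuousOn.mul (by fun_prop (disch := exact hne)) ?_
  exact continuous_ofReal.continuousOn.cpow continuousOn_const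
    fun t ht => ofReal_mem_slitPlane.2 ht

theorem integrableOn {w : ℂ} (hw : 0 < w.re) (β : ℂ) :
    IntegrableOn (besselKernel w β) (Ioi 0) := by
  refine (integrableOn_exp_neg_sub_div_mul_rpow hw β.re).mono'
    ((continuousOn w β).aestronglyMeasurable measurableSet_Ioi) ?_
  filter_upwards [ae_restrict_mem measurableSet_Ioi] with t ht
  exact norm_le le_rfl ht

theorem tendsto_atTop {w : ℂ} (hw : 0 ≤ w.re) (β : ℂ) :
    Tendsto (besselKernel w β) atTop (𝓝 0) := by
  rw [tendsto_zero_iff_norm_tendsto_zero]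
  refine squeeze_zero' (Eventually.of_forall fun t => norm_nonneg _) ?_
    (tendsto_rpow_mul_exp_neg_mul_atTop_nhds_zero β.re 1 one_pos)
  filter_upwards [eventually_gt_atTop 0] with t ht
  calc ‖besselKernel w β t‖ ≤ Real.exp (-t - 0 / t) * t ^ β.re := norm_le hw ht
    _ = t ^ β.re * Real.exp (-1 * t) := by ring_nf

theorem tendsto_nhdsGT_zero {w : ℂ} (hw : 0 < w.re) (β : ℂ) :
    Tendsto (besselKernel w β) (𝓝[>] 0) (𝓝 0) := by
  rw [tendsto_zero_iff_norm_tendsto_zero]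
  refine squeeze_zero' (Eventually.of_forall fun t => norm_nonneg _) ?_
    ((tendsto_rpow_mul_exp_neg_mul_atTop_nhds_zero (-β.re) w.re hw).comp tendsto_inv_nhdsGT_zero)
  filter_upwards [self_mem_nhdsWithin] with t (ht : 0 < t)
  rw [norm_eq w β ht, Function.comp_apply, Real.inv_rpow ht.le, Real.rpow_neg ht.le, inv_inv,
    mul_comm]
  gcongr
  rw [neg_mul, ← div_eq_mul_inv]
  linarith

theorem hasDerivAt_param (w β : ℂ) {t : ℝ} (ht : 0 < t) :
    HasDerivAt (fun w => besselKernel w β t) (-besselKernel w (β - 1) t) w := by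
  have hT : (t : ℂ) ≠ 0 := ofReal_ne_zero.2 ht.ne'
  have h := (((hasDerivAt_id w).div_const (t : ℂ)).const_sub (-(t : ℂ))).cexp.mul_const
    ((t : ℂ) ^ β)
  refine h.congr_deriv ?_
  rw [besselKernel, id, cpow_sub _ _ hT, cpow_one]
  field_simp

theorem hasDerivAt (w β : ℂ) {t : ℝ} (ht : 0 < t) :
    HasDerivAt (besselKernel w β)
      (w * besselKernel w (β - 2) t + β * besselKernel w (β - 1) t - besselKernel w β t) t := by
  have hT : (t : ℂ) ≠ 0 := ofReal_ne_zero.2 ht.ne'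
  have hexp : HasDerivAt (fun s : ℂ => Complex.exp (-s - w / s))
      (Complex.exp (-t - w / t) * (-1 + w / t ^ 2)) t := by
    have := ((hasDerivAt_id (t : ℂ)).neg.sub ((hasDerivAt_inv hT).const_mul w)).cexp
    simpa [div_eq_mul_inv, mul_comm] using this
  have hpow : HasDerivAt (fun s : ℂ => s ^ β) (β * (t : ℂ) ^ (β - 1)) t :=
    (hasStrictDerivAt_cpow_const (ofReal_mem_slitPlane.2 ht)).hasDerivAt
  refine (hexp.mul hpow).comp_ofReal.congr_deriv ?_
  rw [besselKernel, besselKernel, besselKernel, cpow_sub _ _ hT, cpow_sub _ _ hT, cpow_one,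
    cpow_two]
  field_simp
  ring

end besselKernel

theorem hasDerivAt_integral_besselKernel (β : ℂ) {z : ℂ} (hz : 0 < z.re) :
    HasDerivAt (fun w => ∫ t in Ioi 0, besselKernel w β t)
      (-∫ t in Ioi 0, besselKernel z (β - 1) t) z := by
  have hc : 0 < z.re / 2 := half_pos hz
  have hball : ∀ w ∈ Metric.ball z (z.re / 2), z.re / 2 ≤ w.re := fun w hw => by
    have := (abs_re_le_norm (w - z)).trans (mem_ball_iff_norm.1 hw).le
    rw [sub_re, abs_le] at this
    linarith
  rw [← integral_neg]
  refine (hasDerivAt_integral_of_dominated_loc_of_deriv_le (Metric.ball_mem_nhds z hc)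
    (Eventually.of_forall fun w =>
      (besselKernel.continuousOn w β).aestronglyMeasurable measurableSet_Ioi)
    (besselKernel.integrableOn hz β)
    (F' := fun w t => -besselKernel w (β - 1) t)
    ((besselKernel.continuousOn z (β - 1)).aestronglyMeasurable measurableSet_Ioi).neg
    ?_ (integrableOn_exp_neg_sub_div_mul_rpow hc (β - 1).re) ?_).2
  · filter_upwards [ae_restrict_mem measurableSet_Ioi] with t ht w hw
    rw [norm_neg]
    exact besselKernel.norm_le (hball w hw) ht
  · filter_upwards [ae_restrict_mem measurableSet_Ioi] with t ht w _
    exact besselKernel.hasDerivAt_param w β ht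

theorem besselKernel_integral_recurrence (β : ℂ) {z : ℂ} (hz : 0 < z.re) :
    z * (∫ t in Ioi 0, besselKernel z (β - 2) t) + β * (∫ t in Ioi 0, besselKernel z (β - 1) t) =
      ∫ t in Ioi 0, besselKernel z β t := by
  have hint := besselKernel.integrableOn hz
  have hz2 : IntegrableOn (fun t => z * besselKernel z (β - 2) t) (Ioi 0) := (hint _).const_mul z
  have hβ1 : IntegrableOn (fun t => β * besselKernel z (β - 1) t) (Ioi 0) := (hint _).const_mul β
  have hsum : IntegrableOn (fun t => z * besselKernel z (β - 2) t + β * besselKernel z (β - 1) t)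
      (Ioi 0) := hz2.add hβ1
  have hftc := integral_Ioi_of_hasDerivAt_of_tendsto_nhdsGT
    (fun t ht => besselKernel.hasDerivAt z β ht) (hsum.sub (hint β))
    (besselKernel.tendsto_nhdsGT_zero hz β) (besselKernel.tendsto_atTop hz.le β)
  rw [integral_sub hsum (hint β), integral_add hz2 hβ1, integral_const_mul, integral_const_mul,
    sub_self] at hftc
  exact sub_eq_zero.1 hftc

/-- For `Re z > 0`, `w ↦ ∫₀^∞ e^{-t-w/t} t^{-α-1} dt` is complex
differentiable at `z` with derivative `−∫₀^∞ e^{-t-z/t} t^{-α-2} dt`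
(i.e. `∂_z U_α = −U_{α+1}`), and `(z∂_z + α)U_α(z) = −U_{α-1}(z)`. -/
theorem stmt_9 (α z : ℂ) (hz : 0 < z.re) :
    HasDerivAt
      (fun w : ℂ => ∫ t in Set.Ioi (0 : ℝ),
        Complex.exp (-(t : ℂ) - w / (t : ℂ)) * (t : ℂ) ^ (-α - 1))
      (-∫ t in Set.Ioi (0 : ℝ),
        Complex.exp (-(t : ℂ) - z / (t : ℂ)) * (t : ℂ) ^ (-α - 2)) z ∧
    z * (-∫ t in Set.Ioi (0 : ℝ),
          Complex.exp (-(t : ℂ) - z / (t : ℂ)) * (t : ℂ) ^ (-α - 2)) +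
        α * ∫ t in Set.Ioi (0 : ℝ),
          Complex.exp (-(t : ℂ) - z / (t : ℂ)) * (t : ℂ) ^ (-α - 1)
      = -∫ t in Set.Ioi (0 : ℝ),
          Complex.exp (-(t : ℂ) - z / (t : ℂ)) * (t : ℂ) ^ (-α) := by
  have hderiv := hasDerivAt_integral_besselKernel (-α - 1) hz
  rw [show -α - 1 - 1 = -α - 2 by ring] at hderiv
  have hrec := besselKernel_integral_recurrence (-α) hz
  unfold besselKernel at hrec
  exact ⟨hderiv, by linear_combination -hrec⟩
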